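/- arXiv:2405.11645 — 7 statements merged into one kernel-verified Lean document; each statement's English description precedes it below -/
import Mathlib

section
/- Let Q be a finite right Bol loop with Cayley table L, fix a base point p = (r_p, c_p, r_p·c_p), and let π = π_{L,p}. Then π(c) = (c_p·c⁻¹)·c_p for all c in Q − {c_p}. -/
/-- In a finite right Bol loop with base point p = (r_p, c_p, r_p·c_p),
the permutation π satisfies π(c) = (c_p·c⁻¹)·c_p for all c ≠ c_p. -/
theorem rightBol_pi_formula {Q : Type*} [Finite Q] (mul : Q → Q → Q)
    (hL : ∀ a b : Q, ∃! c, mul a c = b)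
    (hR : ∀ a b : Q, ∃! d, mul d a = b)
    (ι : Q) (hι : ∀ a : Q, mul a ι = a ∧ mul ι a = a)
    (hbol : ∀ a b c : Q, mul (mul (mul c a) b) a = mul c (mul (mul a b) a))
    (inv : Q → Q) (hinv : ∀ a : Q, mul a (inv a) = ι ∧ mul (inv a) a = ι)
    (rp cp : Q) (π : Q → Q)
    (hπ : ∀ c : Q, c ≠ cp → ∀ r : Q, mul r cp = mul rp c → mul r (π c) = mul rp cp) :
    ∀ c : Q, c ≠ cp → π c = mul (mul cp (inv c)) cp := by
  -- right inverse property
  have rip : ∀ x a : Q, mul (mul x a) (inv a) = x := by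
    intro x a
    have h1 : mul (mul (mul x a) (inv a)) a = mul x a := by
      rw [hbol, (hinv a).1, (hι a).2]
    exact (hR a (mul x a)).unique h1 rfl
  intro c hc
  -- find r with r·cp = rp·c
  obtain ⟨r, hr, -⟩ := hR cp (mul rp c)
  have h1 : mul r (π c) = mul rp cp := hπ c hc r hr
  have h2 : mul r (mul (mul cp (inv c)) cp) = mul rp cp := by
    have := hbol cp (inv c) r
    rw [hr] at this
    rw [← this, rip]
  exact (hL r (mul rp cp)).unique h1 h2
end

section
/- Let Q be a finite right Bol loop with base point p = (r_p, c_p, r_p·c_p) and associated permutation π of Q − {c_p}. Then π² = id. -/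
/-- In a finite right Bol loop with base point p = (r_p, c_p, r_p·c_p),
the permutation π satisfies π² = id on Q − {c_p}. -/
theorem rightBol_pi_sq_id {Q : Type*} [Finite Q] (mul : Q → Q → Q)
    (hL : ∀ a b : Q, ∃! c, mul a c = b)
    (hR : ∀ a b : Q, ∃! d, mul d a = b)
    (ι : Q) (hι : ∀ a : Q, mul a ι = a ∧ mul ι a = a)
    (hbol : ∀ a b c : Q, mul (mul (mul c a) b) a = mul c (mul (mul a b) a))
    (inv : Q → Q) (hinv : ∀ a : Q, mul a (inv a) = ι ∧ mul (inv a) a = ι)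
    (rp cp : Q) (π : Q → Q)
    (hπ : ∀ c : Q, c ≠ cp → ∀ r : Q, mul r cp = mul rp c → mul r (π c) = mul rp cp) :
    ∀ c : Q, c ≠ cp → π (π c) = c := by
  have lcancel : ∀ a x y : Q, mul a x = mul a y → x = y := fun a x y h =>
    (hL a (mul a y)).unique h rfl
  have rcancel : ∀ a x y : Q, mul x a = mul y a → x = y := fun a x y h =>
    (hR a (mul y a)).unique h rfl
  have rip1 : ∀ x a : Q, mul (mul x a) (inv a) = x := by
    intro x a
    apply rcancel a
    have hb := hbol a (inv a) x
    rw [(hinv a).1, (hι a).2] at hb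
    exact hb
  have rip2 : ∀ x a : Q, mul (mul x (inv a)) a = x := by
    intro x a
    apply rcancel (inv a)
    have hb := hbol (inv a) a x
    rw [(hinv a).2, (hι (inv a)).2] at hb
    exact hb
  have key : ∀ x a b : Q, mul (mul x a) b = x → ∀ z : Q, mul (mul z b) a = z := by
    intro x a b h z
    have h1 : mul (mul a b) a = a := by
      apply lcancel x
      have hb := hbol a b x
      rw [h] at hb
      exact hb.symm
    have h2 := hbol a b (mul z (inv a))
    rw [h1, rip2 z a] at h2
    exact h2
  intro c hc
  have hrcp : mul (mul (mul rp c) (inv cp)) cp = mul rp c := rip2 (mul rp c) cp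
  have hπc := hπ c hc (mul (mul rp c) (inv cp)) hrcp
  have hne : π c ≠ cp := by
    intro he
    apply hc
    apply lcancel rp
    calc mul rp c = mul (mul (mul rp c) (inv cp)) cp := hrcp.symm
      _ = mul (mul (mul rp c) (inv cp)) (π c) := by rw [he]
      _ = mul rp cp := hπc
  have hbolpt : ∀ x : Q, mul x (mul (mul (inv cp) (π c)) (inv cp)) =
      mul (mul (mul x (inv cp)) (π c)) (inv cp) := fun x => (hbol (inv cp) (π c) x).symm
  have step1 : mul (mul rp c) (mul (mul (inv cp) (π c)) (inv cp)) = rp := by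
    rw [hbolpt, hπc, rip1]
  have step2 := key rp c _ step1
  have step3 : mul (mul rp cp) (mul (mul (inv cp) (π c)) (inv cp)) =
      mul (mul rp (π c)) (inv cp) := by
    rw [hbolpt, rip1]
  have step4 : mul (mul (mul rp (π c)) (inv cp)) c = mul rp cp := by
    rw [← step3]; exact step2 (mul rp cp)
  have hr'cp : mul (mul (mul rp (π c)) (inv cp)) cp = mul rp (π c) := rip2 _ cp
  have hππ := hπ (π c) hne (mul (mul rp (π c)) (inv cp)) hr'cp
  exact lcancel _ _ _ (hππ.trans step4.symm)
end

section
/- Let Q be a finite right Bol loop with base point p = (r_p, c_p, r_p·c_p) and associated permutation π of Q − {c_p}. Then for c in Q − {c_p}, π(c) = c if and only if c·c_p⁻¹ = c_p·c⁻¹. -/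
/-- In a finite right Bol loop with base point p = (r_p, c_p, r_p·c_p), for c ≠ c_p:
π(c) = c if and only if c·c_p⁻¹ = c_p·c⁻¹. -/
theorem rightBol_pi_fixed_iff {Q : Type*} [Finite Q] (mul : Q → Q → Q)
    (hL : ∀ a b : Q, ∃! c, mul a c = b)
    (hR : ∀ a b : Q, ∃! d, mul d a = b)
    (ι : Q) (hι : ∀ a : Q, mul a ι = a ∧ mul ι a = a)
    (hbol : ∀ a b c : Q, mul (mul (mul c a) b) a = mul c (mul (mul a b) a))
    (inv : Q → Q) (hinv : ∀ a : Q, mul a (inv a) = ι ∧ mul (inv a) a = ι)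
    (rp cp : Q) (π : Q → Q)
    (hπ : ∀ c : Q, c ≠ cp → ∀ r : Q, mul r cp = mul rp c → mul r (π c) = mul rp cp) :
    ∀ c : Q, c ≠ cp → (π c = c ↔ mul c (inv cp) = mul cp (inv c)) := by
  -- left cancellation
  have lcancel : ∀ a x y : Q, mul a x = mul a y → x = y := by
    intro a x y h
    obtain ⟨z, _, hz⟩ := hL a (mul a y)
    exact (hz x h).trans (hz y rfl).symm
  -- right cancellation
  have rcancel : ∀ a x y : Q, mul x a = mul y a → x = y := by
    intro a x y h
    obtain ⟨z, _, hz⟩ := hR a (mul y a)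
    exact (hz x h).trans (hz y rfl).symm
  -- right inverse property
  have rip : ∀ x a : Q, mul (mul x a) (inv a) = x := by
    intro x a
    have h := hbol a (inv a) x
    rw [(hinv a).1, (hι a).2] at h
    exact rcancel a _ _ h
  have invinv : ∀ a : Q, inv (inv a) = a := by
    intro a
    obtain ⟨z, _, hz⟩ := hL (inv a) ι
    exact (hz (inv (inv a)) (hinv (inv a)).1).trans (hz a (hinv a).2).symm
  -- (x a⁻¹) a = x
  have rip' : ∀ x a : Q, mul (mul x (inv a)) a = x := by
    intro x a
    have := rip x (inv a)
    rwa [invinv] at this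
  intro c hc
  set r := mul (mul rp c) (inv cp) with hr
  have hrc : mul r cp = mul rp c := rip' (mul rp c) cp
  have hpi := hπ c hc r hrc
  have key : mul r c = mul rp (mul (mul c (inv cp)) c) := hbol c (inv cp) rp
  constructor
  · intro h
    rw [h] at hpi
    rw [key] at hpi
    have h2 : mul (mul c (inv cp)) c = cp := lcancel rp _ _ hpi
    have := rip (mul c (inv cp)) c
    rw [h2] at this
    exact this.symm
  · intro h
    have h2 : mul (mul c (inv cp)) c = cp := by
      rw [h]; exact rip' cp c
    have hrc2 : mul r c = mul rp cp := by rw [key, h2]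
    obtain ⟨z, _, hz⟩ := hL r (mul rp cp)
    exact (hz (π c) hpi).trans (hz c hrc2).symm
end

section
/- Let Q be a finite right Bol loop. The set of fixed points of the permutation π_{L,p} (and hence their number) is independent of the first coordinate r_p of the base point p = (r_p, c_p, r_p·c_p): it equals {c ∈ Q − {c_p} : c·c_p⁻¹ = c_p·c⁻¹} for any r_p. -/
/-- In a finite right Bol loop, the set of fixed points of π_{L,p} is independent of
the first coordinate r_p of the base point: it equals
{c ∈ Q − {c_p} : c·c_p⁻¹ = c_p·c⁻¹} for any r_p. -/
theorem rightBol_fixed_points_row_indep {Q : Type*} [Finite Q] (mul : Q → Q → Q)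
    (hL : ∀ a b : Q, ∃! c, mul a c = b)
    (hR : ∀ a b : Q, ∃! d, mul d a = b)
    (ι : Q) (hι : ∀ a : Q, mul a ι = a ∧ mul ι a = a)
    (hbol : ∀ a b c : Q, mul (mul (mul c a) b) a = mul c (mul (mul a b) a))
    (inv : Q → Q) (hinv : ∀ a : Q, mul a (inv a) = ι ∧ mul (inv a) a = ι)
    (cp : Q) :
    ∀ rp : Q, ∀ π : Q → Q,
      (∀ c : Q, c ≠ cp → ∀ r : Q, mul r cp = mul rp c → mul r (π c) = mul rp cp) →
      {c : Q | c ≠ cp ∧ π c = c} = {c : Q | c ≠ cp ∧ mul c (inv cp) = mul cp (inv c)} := by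
  have rcan : ∀ a x y : Q, mul x a = mul y a → x = y := fun a x y h =>
    (hR a (mul y a)).unique h rfl
  have lcan : ∀ a x y : Q, mul a x = mul a y → x = y := fun a x y h =>
    (hL a (mul a y)).unique h rfl
  have rip : ∀ x a : Q, mul (mul x a) (inv a) = x := by
    intro x a
    apply rcan a
    have h := hbol a (inv a) x
    rw [(hinv a).1, (hι a).2] at h
    exact h
  have rip' : ∀ x a : Q, mul (mul x (inv a)) a = x := fun x a =>
    rcan (inv a) _ _ (rip (mul x (inv a)) a)
  intro rp π hπ
  ext c
  simp only [Set.mem_setOf_eq]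
  constructor
  · rintro ⟨hc, hfix⟩
    refine ⟨hc, ?_⟩
    have hr : mul (mul (mul rp c) (inv cp)) cp = mul rp c := rip' (mul rp c) cp
    have h1 := hπ c hc _ hr
    rw [hfix, hbol c (inv cp) rp] at h1
    have h3 : mul (mul c (inv cp)) c = cp := lcan rp _ _ h1
    calc mul c (inv cp) = mul (mul (mul c (inv cp)) c) (inv c) := (rip _ c).symm
      _ = mul cp (inv c) := by rw [h3]
  · rintro ⟨hc, heq⟩
    refine ⟨hc, ?_⟩
    have hr : mul (mul (mul rp c) (inv cp)) cp = mul rp c := rip' (mul rp c) cp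
    have h1 := hπ c hc _ hr
    apply lcan (mul (mul rp c) (inv cp))
    rw [h1, hbol c (inv cp) rp, heq, rip' cp c]
end

section
/- Let Q be a finite Moufang loop with base point p = (r_p, c_p, r_p·c_p) and associated permutation π of Q − {c_p}. Then π(c) = c if and only if c·c_p⁻¹ is its own inverse in Q. Consequently, the number of fixed points of π equals s − 1, where s is the number of elements of Q that are their own inverse. -/
/-- In a finite Moufang loop with base point p = (r_p, c_p, r_p·c_p): π(c) = c iff
c·c_p⁻¹ is its own inverse, and the number of fixed points of π equals s − 1 where
s is the number of elements that are their own inverse. -/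
theorem moufang_pi_fixed_count {Q : Type*} [Fintype Q] [DecidableEq Q]
    (mul : Q → Q → Q)
    (hL : ∀ a b : Q, ∃! c, mul a c = b)
    (hR : ∀ a b : Q, ∃! d, mul d a = b)
    (ι : Q) (hι : ∀ a : Q, mul a ι = a ∧ mul ι a = a)
    (hlbol : ∀ a b c : Q, mul a (mul b (mul a c)) = mul (mul a (mul b a)) c)
    (hrbol : ∀ a b c : Q, mul (mul (mul c a) b) a = mul c (mul (mul a b) a))
    (inv : Q → Q) (hinv : ∀ a : Q, mul a (inv a) = ι ∧ mul (inv a) a = ι)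
    (rp cp : Q) (π : Q → Q)
    (hπ : ∀ c : Q, c ≠ cp → ∀ r : Q, mul r cp = mul rp c → mul r (π c) = mul rp cp) :
    (∀ c : Q, c ≠ cp → (π c = c ↔ inv (mul c (inv cp)) = mul c (inv cp))) ∧
    Set.ncard {c : Q | c ≠ cp ∧ π c = c} = Set.ncard {a : Q | inv a = a} - 1 := by
  -- cancellation
  have lcancel : ∀ a x y : Q, mul a x = mul a y → x = y := by
    intro a x y h
    obtain ⟨z, _, hu⟩ := hL a (mul a y)
    rw [hu x h, hu y rfl]
  have rcancel : ∀ a x y : Q, mul x a = mul y a → x = y := by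
    intro a x y h
    obtain ⟨z, _, hu⟩ := hR a (mul y a)
    rw [hu x h, hu y rfl]
  -- inv inv
  have hinvinv : ∀ a : Q, inv (inv a) = a := by
    intro a
    exact lcancel (inv a) _ _ (by rw [(hinv (inv a)).1, (hinv a).2])
  -- left inverse property
  have LIP : ∀ a z : Q, mul (inv a) (mul a z) = z := by
    intro a z
    apply lcancel a
    have h := hlbol a (inv a) z
    rw [(hinv a).2, (hι a).1] at h
    exact h
  -- right inverse property
  have RIP : ∀ a x : Q, mul (mul x a) (inv a) = x := by
    intro a x
    apply rcancel a
    have h := hrbol a (inv a) x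
    rw [(hinv a).1, (hι a).2] at h
    exact h
  have RIP' : ∀ a x : Q, mul (mul x (inv a)) a = x := by
    intro a x
    have := RIP (inv a) x
    rwa [hinvinv] at this
  -- antiautomorphic inverse property
  have AAIP : ∀ a b : Q, inv (mul a b) = mul (inv b) (inv a) := by
    intro a b
    have h1 : mul (inv (mul a b)) a = inv b := by
      have h := LIP (mul a b) (inv b)
      rwa [RIP] at h
    have h2 := RIP a (inv (mul a b))
    rw [h1] at h2
    exact h2.symm
  -- inv ι = ι
  have hιinv : inv ι = ι := by
    have h1 := (hinv ι).1
    have h2 := (hι (inv ι)).2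
    rw [h2] at h1
    exact h1
  -- key characterization of fixed points
  have key : ∀ c : Q, c ≠ cp → (π c = c ↔ inv (mul c (inv cp)) = mul c (inv cp)) := by
    intro c hne
    have hr : mul (mul (mul rp c) (inv cp)) cp = mul rp c := RIP' cp (mul rp c)
    have hπc := hπ c hne _ hr
    have hb := hrbol c (inv cp) rp
    -- hb : mul (mul (mul rp c) (inv cp)) c = mul rp (mul (mul c (inv cp)) c)
    have step1 : π c = c ↔ mul (mul c (inv cp)) c = cp := by
      constructor
      · intro h
        rw [h] at hπc
        apply lcancel rp
        rw [← hb]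
        exact hπc
      · intro h
        obtain ⟨x, _, hu⟩ := hL (mul (mul rp c) (inv cp)) (mul rp cp)
        rw [hu (π c) hπc]
        refine (hu c ?_).symm
        show mul (mul (mul rp c) (inv cp)) c = mul rp cp
        rw [hb, h]
    have step2 : mul (mul c (inv cp)) c = cp ↔ inv (mul c (inv cp)) = mul c (inv cp) := by
      have haaip : inv (mul c (inv cp)) = mul cp (inv c) := by
        rw [AAIP, hinvinv]
      rw [haaip]
      constructor
      · intro h
        obtain ⟨d, _, hu⟩ := hR c cp
        rw [hu (mul c (inv cp)) h, hu (mul cp (inv c)) (RIP' c cp)]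
      · intro h
        rw [← h, RIP' c cp]
    exact step1.trans step2
  refine ⟨key, ?_⟩
  -- counting
  have hinj : Function.Injective (fun c : Q => mul c (inv cp)) := by
    intro x y h
    exact rcancel (inv cp) x y h
  have himg : (fun c : Q => mul c (inv cp)) '' {c : Q | c ≠ cp ∧ π c = c}
      = {a : Q | inv a = a} \ {ι} := by
    ext a
    constructor
    · rintro ⟨c, ⟨hne, hfix⟩, rfl⟩
      refine ⟨(key c hne).mp hfix, ?_⟩
      simp only [Set.mem_singleton_iff]
      intro h
      apply hne
      apply rcancel (inv cp)
      rw [h, (hinv cp).1]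
    · rintro ⟨ha, hane⟩
      simp only [Set.mem_singleton_iff] at hane
      refine ⟨mul a cp, ⟨?_, ?_⟩, RIP cp a⟩
      · intro h
        apply hane
        apply rcancel cp
        rw [h, (hι cp).2]
      · have hne : mul a cp ≠ cp := by
          intro h
          apply hane
          apply rcancel cp
          rw [h, (hι cp).2]
        rw [key _ hne, RIP cp a]
        exact ha
  have hι_mem : ι ∈ {a : Q | inv a = a} := hιinv
  calc Set.ncard {c : Q | c ≠ cp ∧ π c = c}
      = Set.ncard ((fun c : Q => mul c (inv cp)) '' {c : Q | c ≠ cp ∧ π c = c}) :=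
        (Set.ncard_image_of_injective _ hinj).symm
    _ = Set.ncard ({a : Q | inv a = a} \ {ι}) := by rw [himg]
    _ = Set.ncard {a : Q | inv a = a} - 1 :=
        Set.ncard_diff_singleton_of_mem hι_mem
end

section
/- Let Q be a finite loop with the right inverse property. Suppose that for every base point p = (r_p, c_p, r_p·c_p) and every c in Q − {c_p}, the associated permutation π_{L,p} satisfies π² = id and π(c) = (c_p·c⁻¹)·c_p. Then Q is a right Bol loop, i.e., ((x·a)·b)·a = x·((a·b)·a) for all x, a, b in Q. -/
/-- A finite loop with the right inverse property such that, for every base point,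
the associated permutation satisfies π² = id and π(c) = (c_p·c⁻¹)·c_p, is a right
Bol loop. -/
theorem converse_rightBol {Q : Type*} [Finite Q] (mul : Q → Q → Q)
    (hL : ∀ a b : Q, ∃! c, mul a c = b)
    (hR : ∀ a b : Q, ∃! d, mul d a = b)
    (ι : Q) (hι : ∀ a : Q, mul a ι = a ∧ mul ι a = a)
    (inv : Q → Q) (hinv : ∀ a : Q, mul a (inv a) = ι ∧ mul (inv a) a = ι)
    (hrip : ∀ a b : Q, mul (mul a b) (inv b) = a)
    (H : ∀ rp cp : Q, ∀ π : Q → Q,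
      (∀ c : Q, c ≠ cp → ∀ r : Q, mul r cp = mul rp c → mul r (π c) = mul rp cp) →
      ∀ c : Q, c ≠ cp → π (π c) = c ∧ π c = mul (mul cp (inv c)) cp) :
    ∀ x a b : Q, mul (mul (mul x a) b) a = mul x (mul (mul a b) a) := by
  -- inv is involutive
  have hinvinv : ∀ b : Q, inv (inv b) = b := by
    intro b
    have h1 := (hL (inv b) ι).choose_spec
    have e1 : inv (inv b) = (hL (inv b) ι).choose := h1.2 _ (hinv (inv b)).1
    have e2 : b = (hL (inv b) ι).choose := h1.2 _ (hinv b).2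
    rw [e1, ← e2]
  intro x a b
  by_cases hba : inv b = a
  · have hb : b = inv a := by rw [← hba, hinvinv]
    rw [hb, (hinv a).1, (hι a).2, hrip]
  · set rp := mul (mul x a) b with hrp
    set π : Q → Q := fun c => (hL ((hR a (mul rp c)).choose) (mul rp a)).choose with hπ
    have hprop : ∀ c : Q, c ≠ a → ∀ r : Q, mul r a = mul rp c → mul r (π c) = mul rp a := by
      intro c _ r hr
      have : r = (hR a (mul rp c)).choose := (hR a (mul rp c)).choose_spec.2 r hr
      rw [this]
      exact (hL ((hR a (mul rp c)).choose) (mul rp a)).choose_spec.1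
    have hH := H rp a π hprop (inv b) hba
    have hval : π (inv b) = mul (mul a b) a := by rw [hH.2, hinvinv]
    have hx : mul x a = mul rp (inv b) := by rw [hrp, hrip]
    have := hprop (inv b) hba x hx
    rw [hval] at this
    rw [this]
end

section
/- Let Q be a finite loop with the right inverse property, base point p = (r_p, c_p, r_p·c_p), c in Q − {c_p}, and π = π_{L,p}. Then π²(c) = c if and only if ((r_p·c)·c_p⁻¹)·π(c) = ((r_p·π(c))·c_p⁻¹)·c. -/
/-- In a finite loop with the right inverse property, with base point
p = (r_p, c_p, r_p·c_p) and c ≠ c_p: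
π²(c) = c iff ((r_p·c)·c_p⁻¹)·π(c) = ((r_p·π(c))·c_p⁻¹)·c. -/
theorem loop_rip_pi_sq_iff {Q : Type*} [Finite Q] (mul : Q → Q → Q)
    (hL : ∀ a b : Q, ∃! c, mul a c = b)
    (hR : ∀ a b : Q, ∃! d, mul d a = b)
    (ι : Q) (hι : ∀ a : Q, mul a ι = a ∧ mul ι a = a)
    (inv : Q → Q) (hinv : ∀ a : Q, mul a (inv a) = ι ∧ mul (inv a) a = ι)
    (hrip : ∀ a b : Q, mul (mul a b) (inv b) = a)
    (rp cp : Q) (π : Q → Q)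
    (hπ : ∀ c : Q, c ≠ cp → ∀ r : Q, mul r cp = mul rp c → mul r (π c) = mul rp cp) :
    ∀ c : Q, c ≠ cp →
      (π (π c) = c ↔
        mul (mul (mul rp c) (inv cp)) (π c) = mul (mul (mul rp (π c)) (inv cp)) c) := by
  -- inv is involutive
  have hinvinv : ∀ a : Q, inv (inv a) = a := by
    intro a
    exact (hL (inv a) ι).unique (hinv (inv a)).1 (hinv a).2
  have hkeyr : ∀ x : Q, mul (mul x (inv cp)) cp = x := by
    intro x
    have := hrip x (inv cp)
    rwa [hinvinv cp] at this
  -- left cancellation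
  have hlc : ∀ a x y : Q, mul a x = mul a y → x = y := by
    intro a x y h
    exact ((hL a (mul a y)).unique h rfl)
  intro c hc
  have key1 : mul (mul (mul rp c) (inv cp)) (π c) = mul rp cp :=
    hπ c hc _ (hkeyr (mul rp c))
  have hπc : π c ≠ cp := by
    intro h
    rw [h] at key1
    rw [hkeyr (mul rp c)] at key1
    exact hc (hlc rp c cp key1)
  have key2 : mul (mul (mul rp (π c)) (inv cp)) (π (π c)) = mul rp cp :=
    hπ (π c) hπc _ (hkeyr (mul rp (π c)))
  constructor
  · intro h
    rw [h] at key2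
    exact key1.trans key2.symm
  · intro h
    have : mul (mul (mul rp (π c)) (inv cp)) c = mul rp cp := h ▸ key1
    exact hlc _ _ _ (key2.trans this.symm)
end
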